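/- arXiv:1410.0074 — 3 statements merged into one kernel-verified Lean document; each statement's English description precedes it below -/
import Mathlib

section
/- Let P and Q be distinct rank-one projections on a Hilbert space, with unit vectors x and y in their ranges respectively. Then P - Q = a(R₁ - R₂) for some orthogonal projections R₁, R₂ with R₁R₂ = 0 and a real number a satisfying 2a² = 2 - 2|⟨x,y⟩|². -/
open scoped InnerProductSpace ComplexOrder

noncomputable section

/-- A state on a unital C*-algebra: a continuous linear functional that is unital and positive. -/
def IsState {A : Type*} [NormedRing A] [StarRing A] [NormedAlgebra ℂ A]
    (φ : A →L[ℂ] ℂ) : Prop :=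
  φ 1 = 1 ∧ ∀ a : A, 0 ≤ φ (star a * a)

/-- A pure state: a state that is an extreme point of the state space. -/
def IsPureState {A : Type*} [NormedRing A] [StarRing A] [NormedAlgebra ℂ A]
    (φ : A →L[ℂ] ℂ) : Prop :=
  IsState φ ∧ ∀ (φ₁ φ₂ : A →L[ℂ] ℂ) (t : ℝ), IsState φ₁ → IsState φ₂ →
    0 < t → t < 1 → φ = (t : ℂ) • φ₁ + ((1 - t : ℝ) : ℂ) • φ₂ → φ₁ = φ ∧ φ₂ = φ

/-- A representation of a C*-algebra on a (complex) Hilbert space. -/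
structure CStarRep (A : Type*) [NormedRing A] [StarRing A] [NormedAlgebra ℂ A] where
  carrier : Type
  [ng : NormedAddCommGroup carrier]
  [ip : InnerProductSpace ℂ carrier]
  [cs : CompleteSpace carrier]
  hom : A →⋆ₐ[ℂ] (carrier →L[ℂ] carrier)

attribute [instance] CStarRep.ng CStarRep.ip CStarRep.cs

namespace CStarRep

variable {A : Type*} [NormedRing A] [StarRing A] [NormedAlgebra ℂ A]

/-- The set `S(π, ψ)` of vectors implementing the state `ψ` in the representation `π`. -/
def vecs (π : CStarRep A) (ψ : A →L[ℂ] ℂ) : Set π.carrier :=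
  {x | ∀ a : A, ψ a = ⟪x, π.hom a x⟫_ℂ}

/-- `F_π(ψ, φ) = sup {|⟨x, y⟩| : x ∈ S(π,ψ), y ∈ S(π,φ)}` (which is `0` if either set is
empty, since `sSup ∅ = 0` in `ℝ`). -/
def fidelityIn (π : CStarRep A) (ψ φ : A →L[ℂ] ℂ) : ℝ :=
  sSup {r : ℝ | ∃ x ∈ π.vecs ψ, ∃ y ∈ π.vecs φ, r = ‖⟪x, y⟫_ℂ‖}

open Classical in
/-- `D_π(ψ, φ) = inf {‖x - y‖ : x ∈ S(π,ψ), y ∈ S(π,φ)}`, and `√2` if either set is empty. -/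
def distIn (π : CStarRep A) (ψ φ : A →L[ℂ] ℂ) : ℝ :=
  if (π.vecs ψ).Nonempty ∧ (π.vecs φ).Nonempty then
    sInf {r : ℝ | ∃ x ∈ π.vecs ψ, ∃ y ∈ π.vecs φ, r = ‖x - y‖}
  else Real.sqrt 2

/-- `(π, x)` is a GNS representation of the state `ψ`: `x` implements `ψ` and is cyclic. -/
def IsGNS (π : CStarRep A) (x : π.carrier) (ψ : A →L[ℂ] ℂ) : Prop :=
  x ∈ π.vecs ψ ∧
    Dense ((Submodule.span ℂ (Set.range fun a : A => π.hom a x) : Submodule ℂ π.carrier) :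
      Set π.carrier)

/-- Unitary equivalence of representations. -/
def UnitarilyEquiv (π₁ π₂ : CStarRep A) : Prop :=
  ∃ U : π₁.carrier ≃ₗᵢ[ℂ] π₂.carrier, ∀ (a : A) (x : π₁.carrier),
    U (π₁.hom a x) = π₂.hom a (U x)

end CStarRep

/-- The Bures fidelity `F(ψ, φ) = sup_π F_π(ψ, φ)`. -/
def fidelity {A : Type*} [NormedRing A] [StarRing A] [NormedAlgebra ℂ A]
    (ψ φ : A →L[ℂ] ℂ) : ℝ :=
  sSup {r : ℝ | ∃ π : CStarRep A, r = π.fidelityIn ψ φ}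

/-- The Bures distance `D(ψ, φ) = inf_π D_π(ψ, φ)`. -/
def buresDist {A : Type*} [NormedRing A] [StarRing A] [NormedAlgebra ℂ A]
    (ψ φ : A →L[ℂ] ℂ) : ℝ :=
  sInf {r : ℝ | ∃ π : CStarRep A, r = π.distIn ψ φ}

/-- A Bures representation: a representation in which the fidelity of any two states
is attained. -/
def CStarRep.IsBures {A : Type*} [NormedRing A] [StarRing A] [NormedAlgebra ℂ A]
    (π : CStarRep A) : Prop :=
  ∀ ψ φ : A →L[ℂ] ℂ, IsState ψ → IsState φ → fidelity ψ φ = π.fidelityIn ψ φ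

/-- A positive element of a *-ring: one of the form `y* y`. -/
def IsPosElem {R : Type*} [Mul R] [Star R] (x : R) : Prop := ∃ y, x = star y * y

/-- `T` is `n`-positive: the induced map on `n × n` matrices preserves positivity. -/
def IsNPositive {A : Type*} [NormedRing A] [StarRing A] [NormedAlgebra ℂ A]
    (T : A →L[ℂ] A) (n : ℕ) : Prop :=
  ∀ M : Matrix (Fin n) (Fin n) A, IsPosElem M → IsPosElem (M.map T)

/-- `T` is completely positive: `n`-positive for every `n`. -/
def IsCompletelyPositive {A : Type*} [NormedRing A] [StarRing A] [NormedAlgebra ℂ A]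
    (T : A →L[ℂ] A) : Prop :=
  ∀ n : ℕ, IsNPositive T n


set_option maxHeartbeats 1000000 in
/-- If `P ≠ Q` are the rank-one projections onto the spans of unit vectors
`x` and `y`, then `P - Q = a (R₁ - R₂)` for orthogonal projections `R₁, R₂` with `R₁ R₂ = 0`
and a real `a` with `2 a² = 2 - 2 |⟨x, y⟩|²`. -/
theorem stmt0 {H : Type*} [NormedAddCommGroup H] [InnerProductSpace ℂ H] [CompleteSpace H]
    (x y : H) (hx : ‖x‖ = 1) (hy : ‖y‖ = 1) (P Q : H →L[ℂ] H)
    (hP : P = (ℂ ∙ x).subtypeL.comp (Submodule.orthogonalProjection (ℂ ∙ x)))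
    (hQ : Q = (ℂ ∙ y).subtypeL.comp (Submodule.orthogonalProjection (ℂ ∙ y)))
    (hPQ : P ≠ Q) :
    ∃ (R₁ R₂ : H →L[ℂ] H) (a : ℝ),
      IsSelfAdjoint R₁ ∧ IsIdempotentElem R₁ ∧
      IsSelfAdjoint R₂ ∧ IsIdempotentElem R₂ ∧
      R₁ * R₂ = 0 ∧
      P - Q = (a : ℂ) • (R₁ - R₂) ∧
      2 * a ^ 2 = 2 - 2 * ‖⟪x, y⟫_ℂ‖ ^ 2 := by
  classical
  set c : ℂ := ⟪x, y⟫_ℂ with hc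
  have hPz : ∀ z, P z = ⟪x, z⟫_ℂ • x := by
    intro z
    rw [hP]
    exact Submodule.starProjection_unit_singleton ℂ hx z
  have hQz : ∀ z, Q z = ⟪y, z⟫_ℂ • y := by
    intro z
    rw [hQ]
    exact Submodule.starProjection_unit_singleton ℂ hy z
  have hx0 : x ≠ 0 := by intro h; rw [h] at hx; simp at hx
  have hy0 : y ≠ 0 := by intro h; rw [h] at hy; simp at hy
  -- |c| < 1
  have habs_le : ‖c‖ ≤ 1 := by
    have := norm_inner_le_norm (𝕜 := ℂ) x y
    simpa [hx, hy] using this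
  have habs_lt : ‖c‖ < 1 := by
    rcases lt_or_eq_of_le habs_le with h | h
    · exact h
    · exfalso
      have : ‖⟪x, y⟫_ℂ‖ = ‖x‖ * ‖y‖ := by simp [hx, hy, ← hc]; exact h
      obtain ⟨r, hr0, hr⟩ := (norm_inner_eq_norm_iff hx0 hy0).mp this
      have hrn : ‖r‖ = 1 := by
        have := hy
        rw [hr, norm_smul, hx, mul_one] at this
        exact this
      have hr1 : (starRingEnd ℂ) r * r = 1 := by
        rw [mul_comm, Complex.mul_conj, Complex.normSq_eq_norm_sq, hrn]
        norm_num
      apply hPQ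
      ext z
      rw [hPz, hQz, hr, inner_smul_left, smul_smul]
      match_scalars
      linear_combination -⟪x, z⟫_ℂ * hr1
  set t : ℝ := 1 - ‖c‖ ^ 2 with ht
  have ht0 : 0 < t := by
    have h1 : ‖c‖ ^ 2 < 1 := by
      have := norm_nonneg c
      nlinarith
    simp only [ht]
    linarith
  have htne : (t : ℂ) ≠ 0 := by
    exact_mod_cast Complex.ofReal_ne_zero.mpr (ne_of_gt ht0)
  set a : ℝ := Real.sqrt t with ha
  have ha2 : a ^ 2 = t := Real.sq_sqrt ht0.le
  have ha2' : (a : ℂ) * (a : ℂ) = (t : ℂ) := by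
    push_cast [← ha2]; ring
  set T : H →L[ℂ] H := P - Q with hTdef
  -- cube identity
  have hcc : c * (starRingEnd ℂ) c = ((‖c‖ : ℝ) ^ 2 : ℝ) := by
    rw [Complex.mul_conj]
    norm_cast
    rw [Complex.sq_norm]
  have hxx : ⟪x, x⟫_ℂ = 1 := by
    rw [inner_self_eq_norm_sq_to_K, hx]; norm_num
  have hyy : ⟪y, y⟫_ℂ = 1 := by
    rw [inner_self_eq_norm_sq_to_K, hy]; norm_num
  have hyx : ⟪y, x⟫_ℂ = (starRingEnd ℂ) c := by rw [← inner_conj_symm, hc]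
  have hT3 : T * T * T = (t : ℂ) • T := by
    ext z
    have hTz : ∀ w, T w = ⟪x, w⟫_ℂ • x - ⟪y, w⟫_ℂ • y := by
      intro w
      simp [hTdef, ContinuousLinearMap.sub_apply, hPz, hQz]
    show T (T (T z)) = (t : ℂ) • T z
    rw [hTz z, hTz, hTz]
    simp only [inner_sub_right, inner_smul_right, hxx, hyy, hyx, ← hc]
    have htc : (t : ℂ) = 1 - c * (starRingEnd ℂ) c := by
      rw [hcc]; push_cast [ht]; ring
    rw [htc]
    match_scalars <;> ring
  have hTS : T * (T * T) = (t : ℂ) • T := by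
    rw [← mul_assoc T T T]; exact hT3
  have hSS : (T * T) * (T * T) = (t : ℂ) • (T * T) := by
    rw [← mul_assoc (T * T) T T, hT3, smul_mul_assoc]
  -- self-adjointness
  have hsaT : IsSelfAdjoint T := by
    rw [hTdef, hP, hQ]
    exact (isSelfAdjoint_starProjection _).sub (isSelfAdjoint_starProjection _)
  have hsaS : IsSelfAdjoint (T * T) := by
    show star (T * T) = T * T
    rw [star_mul, hsaT.star_eq]
  have hT3a : T * T * T = ((a:ℂ) * (a:ℂ)) • T := by rw [hT3, ha2']
  have hTSa : T * (T * T) = ((a:ℂ) * (a:ℂ)) • T := by rw [hTS, ha2']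
  have hSSa : (T * T) * (T * T) = ((a:ℂ) * (a:ℂ)) • (T * T) := by rw [hSS, ha2']
  have hane : (a : ℂ) ≠ 0 := by
    have : a ≠ 0 := by positivity
    exact_mod_cast Complex.ofReal_ne_zero.mpr this
  set k : ℂ := (2 * (a : ℂ) * (a : ℂ))⁻¹ with hk
  have hks : star k = k := by
    rw [hk]
    simp [Complex.conj_ofReal]

  have hsa1 : star ((a : ℂ)) = (a : ℂ) := by
    rw [Complex.star_def, Complex.conj_ofReal]
  refine ⟨k • (T * T + (a : ℂ) • T), k • (T * T - (a : ℂ) • T), a, ?_, ?_, ?_, ?_, ?_, ?_, ?_⟩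
  · -- IsSelfAdjoint R₁
    show star (k • (T * T + (a:ℂ) • T)) = k • (T * T + (a:ℂ) • T)
    rw [star_smul, hks, star_add, star_smul, hsa1, hsaT.star_eq, hsaS.star_eq]
  · -- idempotent R₁
    show (k • (T * T + (a:ℂ) • T)) * (k • (T * T + (a:ℂ) • T)) = k • (T * T + (a:ℂ) • T)
    simp only [add_mul, mul_add, smul_mul_assoc, mul_smul_comm, smul_smul]
    rw [hSSa, hT3a, hTSa]
    match_scalars <;> (rw [hk]; field_simp <;> ring)
  · show star (k • (T * T - (a:ℂ) • T)) = k • (T * T - (a:ℂ) • T)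
    rw [star_smul, hks, star_sub, star_smul, hsa1, hsaT.star_eq, hsaS.star_eq]
  · show (k • (T * T - (a:ℂ) • T)) * (k • (T * T - (a:ℂ) • T)) = k • (T * T - (a:ℂ) • T)
    simp only [sub_mul, mul_sub, smul_mul_assoc, mul_smul_comm, smul_smul]
    rw [hSSa, hT3a, hTSa]
    match_scalars <;> (rw [hk]; field_simp <;> ring)
  · show (k • (T * T + (a:ℂ) • T)) * (k • (T * T - (a:ℂ) • T)) = 0
    simp only [add_mul, mul_sub, smul_mul_assoc, mul_smul_comm, smul_smul]
    rw [hSSa, hT3a, hTSa]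
    match_scalars <;> (rw [hk]; field_simp <;> ring)
  · show T = (a : ℂ) • (k • (T * T + (a:ℂ) • T) - k • (T * T - (a:ℂ) • T))
    rw [← smul_sub k]
    have h2 : (T * T + (a:ℂ) • T) - (T * T - (a:ℂ) • T) = ((2 : ℂ) * a) • T := by module
    rw [h2, smul_smul, smul_smul]
    have h3 : (a:ℂ) * k * (2 * (a:ℂ)) = 1 := by
      rw [hk]; field_simp
    rw [h3, one_smul]
  · rw [ha2, ht]
    ring

end
end

section
/- Let ψ, φ be states of a unital C*-algebra A, π a representation of A, x ∈ S(π,ψ), and Z a positive operator in π(A)'' with φ(A) = ⟨Zx, π(A)Zx⟩ for all A ∈ A. Then F_π(ψ,φ) = ⟨x, Zx⟩. -/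
open scoped InnerProductSpace ComplexOrder

noncomputable section

section AuxLemmas

variable {E : Type*} [NormedAddCommGroup E] [InnerProductSpace ℂ E] [CompleteSpace E]


lemma csZ (Z : E →L[ℂ] E) (hZ : Z.IsPositive) (u v : E) :
    ‖⟪u, Z v⟫_ℂ‖ ≤ Real.sqrt (RCLike.re ⟪u, Z u⟫_ℂ) * Real.sqrt (RCLike.re ⟪v, Z v⟫_ℂ) := by
  have hsa : ∀ a b : E, ⟪Z a, b⟫_ℂ = ⟪a, Z b⟫_ℂ := fun a b => by
    conv_lhs => rw [← hZ.isSelfAdjoint.adjoint_eq]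
    exact ContinuousLinearMap.adjoint_inner_left Z b a
  let core : PreInnerProductSpace.Core ℂ E :=
  { inner := fun a b => ⟪a, Z b⟫_ℂ
    conj_inner_symm := fun a b => by
      show (starRingEnd ℂ) ⟪b, Z a⟫_ℂ = ⟪a, Z b⟫_ℂ; rw [inner_conj_symm, hsa]
    re_inner_nonneg := fun a => by
      simpa [ContinuousLinearMap.reApplyInnerSelf, inner_re_symm] using hZ.2 a
    add_left := fun a b c => inner_add_left _ _ _
    smul_left := fun a b r => inner_smul_left _ _ _ }
  have h := @InnerProductSpace.Core.inner_mul_inner_self_le ℂ E _ _ _ core u v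
  have hswap : (‖⟪v, Z u⟫_ℂ‖ : ℝ) = ‖⟪u, Z v⟫_ℂ‖ := by
    rw [← inner_conj_symm, hsa, RCLike.norm_conj]
  have h' : ‖⟪u, Z v⟫_ℂ‖ * ‖⟪u, Z v⟫_ℂ‖ ≤
      RCLike.re ⟪u, Z u⟫_ℂ * RCLike.re ⟪v, Z v⟫_ℂ := by
    calc ‖⟪u, Z v⟫_ℂ‖ * ‖⟪u, Z v⟫_ℂ‖ = ‖⟪u, Z v⟫_ℂ‖ * ‖⟪v, Z u⟫_ℂ‖ := by rw [hswap]
    _ ≤ _ := h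
  calc ‖⟪u, Z v⟫_ℂ‖ = Real.sqrt (‖⟪u, Z v⟫_ℂ‖ * ‖⟪u, Z v⟫_ℂ‖) :=
        (Real.sqrt_mul_self (norm_nonneg _)).symm
  _ ≤ Real.sqrt (RCLike.re ⟪u, Z u⟫_ℂ * RCLike.re ⟪v, Z v⟫_ℂ) := Real.sqrt_le_sqrt h'
  _ = _ := Real.sqrt_mul (by simpa [ContinuousLinearMap.reApplyInnerSelf, inner_re_symm] using hZ.2 u) _

lemma key_bound (Z W : E →L[ℂ] E) (hZ : Z.IsPositive) (hW : ∀ y : E, ‖W y‖ ≤ ‖y‖)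
    (hWs : ∀ y : E, ‖(star W) y‖ ≤ ‖y‖)
    (hZW : Z * W = W * Z) (hZWs : Z * star W = star W * Z) (x : E) :
    ‖⟪x, W (Z x)⟫_ℂ‖ ≤ RCLike.re ⟪x, Z x⟫_ℂ := by
  set c : ℝ := RCLike.re ⟪x, Z x⟫_ℂ with hc
  have hc0 : 0 ≤ c := by
    simpa [hc, ContinuousLinearMap.reApplyInnerSelf, inner_re_symm] using hZ.2 x
  set T : E →L[ℂ] E := star W * W with hT
  have hTsa : IsSelfAdjoint T := IsSelfAdjoint.star_mul_self W
  have hTy : ∀ y : E, ‖T y‖ ≤ ‖y‖ := fun y => by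
    calc ‖T y‖ = ‖(star W) (W y)‖ := rfl
    _ ≤ ‖W y‖ := hWs _
    _ ≤ ‖y‖ := hW _
  have hTn : ∀ (n : ℕ) (y : E), ‖(T ^ n) y‖ ≤ ‖y‖ := by
    intro n
    induction n with
    | zero => intro y; simp
    | succ n ih =>
      intro y
      rw [pow_succ]
      calc ‖(T ^ n * T) y‖ = ‖(T ^ n) (T y)‖ := rfl
      _ ≤ ‖T y‖ := ih _
      _ ≤ ‖y‖ := hTy y
  have hZTc : Commute Z T := by
    show Z * T = T * Z
    rw [hT, ← mul_assoc, hZWs, mul_assoc, hZW, mul_assoc]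
  have hZTn : ∀ n : ℕ, Z * T ^ n = T ^ n * Z := fun n => (hZTc.pow_right n).eq
  have hTn_sa : ∀ n : ℕ, IsSelfAdjoint (T ^ n) := fun n => hTsa.pow n
  set s : ℕ → ℝ := fun n => RCLike.re ⟪x, Z ((T ^ n) x)⟫_ℂ with hs
  -- s (2n) as a "square"
  have hs2n : ∀ n : ℕ, s (2 * n) = RCLike.re ⟪(T ^ n) x, Z ((T ^ n) x)⟫_ℂ := by
    intro n
    have : ⟪(T ^ n) x, Z ((T ^ n) x)⟫_ℂ = ⟪x, Z ((T ^ (2 * n)) x)⟫_ℂ := by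
      have h1 := ContinuousLinearMap.adjoint_inner_left (T ^ n) (Z ((T ^ n) x)) x
      rw [(hTn_sa n).adjoint_eq] at h1
      rw [h1]
      congr 1
      calc (T ^ n) (Z ((T ^ n) x)) = (T ^ n * Z * T ^ n) x := rfl
      _ = (Z * (T ^ n * T ^ n)) x := by rw [← hZTn n, mul_assoc]
      _ = Z ((T ^ (2 * n)) x) := by rw [two_mul, pow_add]; rfl
    rw [hs]; simp only [this]
  have hs2n_nonneg : ∀ n : ℕ, 0 ≤ s (2 * n) := by
    intro n
    rw [hs2n n]
    simpa [ContinuousLinearMap.reApplyInnerSelf, inner_re_symm] using hZ.2 ((T ^ n) x)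
  set M : ℝ := ‖Z‖ * ‖x‖ * ‖x‖ with hM
  have hM0 : 0 ≤ M := by positivity
  have hsM : ∀ n : ℕ, s n ≤ M := by
    intro n
    calc s n ≤ ‖⟪x, Z ((T ^ n) x)⟫_ℂ‖ := RCLike.re_le_norm _
    _ ≤ ‖x‖ * ‖Z ((T ^ n) x)‖ := norm_inner_le_norm _ _
    _ ≤ ‖x‖ * (‖Z‖ * ‖(T ^ n) x‖) :=
        mul_le_mul_of_nonneg_left (Z.le_opNorm _) (norm_nonneg _)
    _ ≤ ‖x‖ * (‖Z‖ * ‖x‖) := by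
        have := hTn n x
        have h2 : ‖Z‖ * ‖(T ^ n) x‖ ≤ ‖Z‖ * ‖x‖ :=
          mul_le_mul_of_nonneg_left this (norm_nonneg _)
        exact mul_le_mul_of_nonneg_left h2 (norm_nonneg _)
    _ = M := by rw [hM]; ring
  have hrec : ∀ n : ℕ, s n ≤ Real.sqrt c * Real.sqrt (s (2 * n)) := by
    intro n
    calc s n ≤ ‖⟪x, Z ((T ^ n) x)⟫_ℂ‖ := RCLike.re_le_norm _
    _ ≤ Real.sqrt (RCLike.re ⟪x, Z x⟫_ℂ) * Real.sqrt (RCLike.re ⟪(T ^ n) x, Z ((T ^ n) x)⟫_ℂ) :=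
        csZ Z hZ x ((T ^ n) x)
    _ = Real.sqrt c * Real.sqrt (s (2 * n)) := by rw [← hc, hs2n n]
  -- the iteration
  have hiter : ∀ (k : ℕ) (n : ℕ), s n ≤ c ^ (1 - (1/2 : ℝ) ^ k) * M ^ ((1/2 : ℝ) ^ k) := by
    intro k
    induction k with
    | zero =>
      intro n
      simpa using hsM n
    | succ k ih =>
      intro n
      have hek : (0:ℝ) < (1/2 : ℝ) ^ k := by positivity
      have hek1 : (1/2 : ℝ) ^ k ≤ 1 := by
        apply pow_le_one₀ <;> norm_num
      have h1 : s (2 * n) ≤ c ^ (1 - (1/2 : ℝ) ^ k) * M ^ ((1/2 : ℝ) ^ k) := ih (2 * n)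
      have h2 : s n ≤ Real.sqrt c * Real.sqrt (c ^ (1 - (1/2 : ℝ) ^ k) * M ^ ((1/2 : ℝ) ^ k)) := by
        refine (hrec n).trans ?_
        exact mul_le_mul_of_nonneg_left (Real.sqrt_le_sqrt h1) (Real.sqrt_nonneg _)
      refine h2.trans ?_
      rw [Real.sqrt_mul (Real.rpow_nonneg hc0 _), Real.sqrt_eq_rpow, Real.sqrt_eq_rpow,
        Real.sqrt_eq_rpow, ← Real.rpow_mul hc0, ← Real.rpow_mul hM0, ← mul_assoc,
        ← Real.rpow_add' hc0 (ne_of_gt (by nlinarith [hek1]))]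
      apply le_of_eq
      have e1 : (1:ℝ)/2 + (1 - (1/2:ℝ)^k) * (1/2) = 1 - (1/2:ℝ)^(k+1) := by ring
      have e2 : (1/2:ℝ)^k * (1/2) = (1/2:ℝ)^(k+1) := by ring
      rw [e1, e2]
  -- conclude s 1 ≤ c
  have hs1 : s 1 ≤ c := by
    rcases eq_or_lt_of_le hc0 with hczero | hcpos
    · have := hiter 1 1
      have hc12 : c ^ (1 - (1/2:ℝ)^1) = 0 := by
        rw [← hczero]
        rw [Real.zero_rpow (by norm_num)]
      rw [hc12, zero_mul] at this
      exact this.trans hczero.le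
    · set M' : ℝ := max M c with hM'
      have hM'pos : 0 < M' := lt_of_lt_of_le hcpos (le_max_right _ _)
      have hbd : ∀ k : ℕ, s 1 ≤ c ^ (1 - (1/2:ℝ)^k) * M' ^ ((1/2:ℝ)^k) := by
        intro k
        refine (hiter k 1).trans ?_
        apply mul_le_mul_of_nonneg_left _ (Real.rpow_nonneg hc0 _)
        exact Real.rpow_le_rpow hM0 (le_max_left _ _) (by positivity)
      have htend : Filter.Tendsto (fun k : ℕ => c ^ (1 - (1/2:ℝ)^k) * M' ^ ((1/2:ℝ)^k))
          Filter.atTop (nhds c) := by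
        have hpow : Filter.Tendsto (fun k : ℕ => ((1:ℝ)/2)^k) Filter.atTop (nhds 0) :=
          tendsto_pow_atTop_nhds_zero_of_lt_one (by norm_num) (by norm_num)
        have h1 : Filter.Tendsto (fun k : ℕ => c ^ (1 - (1/2:ℝ)^k)) Filter.atTop (nhds (c ^ (1:ℝ))) := by
          apply Filter.Tendsto.comp (Real.continuousAt_const_rpow (ne_of_gt hcpos)).tendsto
          simpa using (tendsto_const_nhds.sub hpow)
        have h2 : Filter.Tendsto (fun k : ℕ => M' ^ ((1/2:ℝ)^k)) Filter.atTop (nhds (M' ^ (0:ℝ))) := by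
          exact Filter.Tendsto.comp (Real.continuousAt_const_rpow (ne_of_gt hM'pos)).tendsto hpow
        have := h1.mul h2
        simpa [Real.rpow_one, Real.rpow_zero] using this
      exact ge_of_tendsto htend (Filter.Eventually.of_forall hbd)
  -- final computation
  have hkey : ⟪x, W (Z x)⟫_ℂ = ⟪x, Z (W x)⟫_ℂ := by
    congr 1
    calc W (Z x) = (W * Z) x := rfl
    _ = (Z * W) x := by rw [hZW]
    _ = Z (W x) := rfl
  have hWZ : RCLike.re ⟪W x, Z (W x)⟫_ℂ = s 1 := by
    have h1 : ⟪W x, Z (W x)⟫_ℂ = ⟪x, (star W) (Z (W x))⟫_ℂ := by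
      rw [ContinuousLinearMap.star_eq_adjoint, ContinuousLinearMap.adjoint_inner_right]
    have h2 : (star W) (Z (W x)) = Z (T x) := by
      calc (star W) (Z (W x)) = (star W * Z * W) x := rfl
      _ = (Z * (star W * W)) x := by rw [← hZWs, mul_assoc]
      _ = Z (T x) := by rw [← hT]; rfl
    rw [hs]
    simp only [h1, h2, pow_one]
  calc ‖⟪x, W (Z x)⟫_ℂ‖ = ‖⟪x, Z (W x)⟫_ℂ‖ := by rw [hkey]
  _ ≤ Real.sqrt (RCLike.re ⟪x, Z x⟫_ℂ) * Real.sqrt (RCLike.re ⟪W x, Z (W x)⟫_ℂ) := csZ Z hZ x (W x)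
  _ = Real.sqrt c * Real.sqrt (s 1) := by rw [← hc, hWZ]
  _ ≤ Real.sqrt c * Real.sqrt c := mul_le_mul_of_nonneg_left (Real.sqrt_le_sqrt hs1) (Real.sqrt_nonneg _)
  _ = c := Real.mul_self_sqrt hc0

end AuxLemmas

section Intertwiner

variable {A : Type*} [NormedRing A] [StarRing A] [NormedAlgebra ℂ A]

/-- adjoint relation for a star representation -/
lemma rep_adjoint (π : CStarRep A) (b : A) (u z : π.carrier) :
    ⟪π.hom b u, z⟫_ℂ = ⟪u, π.hom (star b) z⟫_ℂ := by
  rw [map_star]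
  rw [ContinuousLinearMap.star_eq_adjoint, ContinuousLinearMap.adjoint_inner_right]

lemma exists_intertwiner (π : CStarRep A) (v w : π.carrier)
    (h : ∀ a : A, ⟪v, π.hom a v⟫_ℂ = ⟪w, π.hom a w⟫_ℂ) :
    ∃ U : π.carrier →L[ℂ] π.carrier, (∀ z, ‖U z‖ ≤ ‖z‖) ∧ U v = w ∧
      ∀ b : A, π.hom b * U = U * π.hom b := by
  classical
  -- the two orbit maps
  set L : A →ₗ[ℂ] π.carrier :=
    { toFun := fun a => π.hom a v
      map_add' := fun a b => by simp [map_add]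
      map_smul' := fun r a => by simp [map_smul] } with hLdef
  set L' : A →ₗ[ℂ] π.carrier :=
    { toFun := fun a => π.hom a w
      map_add' := fun a b => by simp [map_add]
      map_smul' := fun r a => by simp [map_smul] } with hL'def
  have hLa : ∀ a : A, L a = π.hom a v := fun a => rfl
  have hL'a : ∀ a : A, L' a = π.hom a w := fun a => rfl
  -- norms agree
  have hnorm : ∀ a : A, ‖L' a‖ = ‖L a‖ := by
    intro a
    have h1 : (⟪π.hom a v, π.hom a v⟫_ℂ) = ⟪v, π.hom (star a * a) v⟫_ℂ := by
      rw [rep_adjoint π a v (π.hom a v), map_mul]; rfl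
    have h2 : (⟪π.hom a w, π.hom a w⟫_ℂ) = ⟪w, π.hom (star a * a) w⟫_ℂ := by
      rw [rep_adjoint π a w (π.hom a w), map_mul]; rfl
    have h3 : (⟪π.hom a w, π.hom a w⟫_ℂ) = ⟪π.hom a v, π.hom a v⟫_ℂ := by
      rw [h1, h2]; exact (h (star a * a)).symm
    have h4 : (‖π.hom a w‖ : ℝ) ^ 2 = ‖π.hom a v‖ ^ 2 := by
      rw [← @inner_self_eq_norm_sq ℂ, ← @inner_self_eq_norm_sq ℂ, h3]
    have h5 := congrArg Real.sqrt h4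
    rwa [Real.sqrt_sq (norm_nonneg _), Real.sqrt_sq (norm_nonneg _)] at h5
  -- kernels agree
  have hker : LinearMap.ker L ≤ LinearMap.ker L' := by
    intro a ha
    rw [LinearMap.mem_ker] at ha ⊢
    have : ‖L' a‖ = 0 := by rw [hnorm a, ha, norm_zero]
    exact norm_eq_zero.mp this
  set K : Submodule ℂ π.carrier := LinearMap.range L with hK
  -- the densely-defined intertwiner on K
  set g : K →ₗ[ℂ] π.carrier :=
    ((LinearMap.ker L).liftQ L' hker).comp L.quotKerEquivRange.symm.toLinearMap with hg
  have hgL : ∀ a : A, g ⟨L a, LinearMap.mem_range_self L a⟩ = L' a := by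
    intro a
    have h1 : L.quotKerEquivRange (Submodule.Quotient.mk a)
        = ⟨L a, LinearMap.mem_range_self L a⟩ := by
      apply Subtype.ext
      exact L.quotKerEquivRange_apply_mk a
    have h2 : L.quotKerEquivRange.symm ⟨L a, LinearMap.mem_range_self L a⟩
        = Submodule.Quotient.mk a := by
      rw [← h1, LinearEquiv.symm_apply_apply]
    rw [hg]
    simp only [LinearMap.comp_apply, LinearEquiv.coe_toLinearMap, h2, Submodule.liftQ_apply]
  have hgiso : ∀ y : K, ‖g y‖ = ‖(y : π.carrier)‖ := by
    rintro ⟨y, hy⟩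
    obtain ⟨a, rfl⟩ := hy
    rw [hgL a, hnorm a]
  set f : K →L[ℂ] π.carrier := g.mkContinuous 1 (fun y => by rw [hgiso y, one_mul]; exact le_of_eq rfl) with hf
  have hfval : ∀ y : K, f y = g y := fun y => rfl
  set Kc : Submodule ℂ π.carrier := K.topologicalClosure with hKc
  haveI : CompleteSpace Kc := (Submodule.isClosed_topologicalClosure K).completeSpace_coe
  set e : K →L[ℂ] Kc :=
    LinearMap.mkContinuous (Submodule.inclusion K.le_topologicalClosure) 1
      (fun y => by rw [one_mul]; exact le_of_eq rfl) with he
  have heval : ∀ y : K, ((e y : Kc) : π.carrier) = (y : π.carrier) := fun y => rfl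
  have he_bound : ∀ y : K, ‖y‖ ≤ ((1 : NNReal) : ℝ) * ‖e y‖ := fun y => by
    rw [NNReal.coe_one, one_mul]; exact le_of_eq rfl
  have he_dense : DenseRange e := by
    intro z
    apply closure_subtype.mpr
    have himg : (Subtype.val '' (Set.range (⇑e) : Set Kc) : Set π.carrier)
        = (K : Set π.carrier) := by
      ext u
      constructor
      · rintro ⟨y, ⟨y', rfl⟩, rfl⟩
        exact y'.2
      · intro hu
        exact ⟨e ⟨u, hu⟩, ⟨⟨u, hu⟩, rfl⟩, rfl⟩
    rw [himg, ← Submodule.topologicalClosure_coe]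
    exact z.2
  set h_ui := (ContinuousLinearMap.isUniformEmbedding_of_bound e he_bound).isUniformInducing
    with hui
  set F : Kc →L[ℂ] π.carrier := f.extend e with hF
  have hFnorm : ‖F‖ ≤ 1 := by
    have h1 := ContinuousLinearMap.opNorm_extend_le f he_dense he_bound
    have h2 : ‖f‖ ≤ 1 := g.mkContinuous_norm_le zero_le_one (fun y => by rw [hgiso y, one_mul]; exact le_of_eq rfl)
    calc ‖F‖ ≤ ((1 : NNReal) : ℝ) * ‖f‖ := h1
    _ ≤ 1 := by rw [NNReal.coe_one, one_mul]; exact h2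
  set P := Kc.orthogonalProjectionOnto with hP
  set U : π.carrier →L[ℂ] π.carrier := F.comp (P : π.carrier →L[ℂ] Kc) with hU
  -- values on K
  have hUK : ∀ a : A, U (L a) = L' a := by
    intro a
    have hmem : (L a : π.carrier) ∈ Kc := K.le_topologicalClosure (LinearMap.mem_range_self L a)
    have hPe : P (L a) = e ⟨L a, LinearMap.mem_range_self L a⟩ := by
      have h1 : P ((⟨L a, hmem⟩ : Kc) : π.carrier) = ⟨L a, hmem⟩ :=
        Submodule.orthogonalProjectionOnto_mem_subspace_eq_self _
      rw [show ((⟨L a, hmem⟩ : Kc) : π.carrier) = L a from rfl] at h1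
      rw [h1]
      apply Subtype.ext
      rfl
    rw [hU]
    calc F.comp (P : π.carrier →L[ℂ] Kc) (L a) = F (P (L a)) := rfl
    _ = F (e ⟨L a, LinearMap.mem_range_self L a⟩) := by rw [hPe]
    _ = f ⟨L a, LinearMap.mem_range_self L a⟩ := ContinuousLinearMap.extend_eq _ he_dense h_ui _
    _ = L' a := by rw [hfval, hgL]
  -- vanishing on the orthogonal complement
  have hUperp : ∀ z : π.carrier, z ∈ Kcᗮ → U z = 0 := by
    intro z hz
    have : P z = 0 := Submodule.orthogonalProjectionOnto_apply_of_mem_orthogonal hz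
    rw [hU]
    calc F.comp (P : π.carrier →L[ℂ] Kc) z = F (P z) := rfl
    _ = F 0 := by rw [this]
    _ = 0 := map_zero F
  have hUnorm : ∀ z : π.carrier, ‖U z‖ ≤ ‖z‖ := by
    intro z
    calc ‖U z‖ = ‖F (P z)‖ := rfl
    _ ≤ ‖F‖ * ‖P z‖ := F.le_opNorm _
    _ ≤ 1 * ‖P z‖ := by
        apply mul_le_mul_of_nonneg_right hFnorm (norm_nonneg _)
    _ = ‖P z‖ := one_mul _
    _ ≤ ‖z‖ := by
        have h1 := (Kc.orthogonalProjectionOnto).le_opNorm z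
        have h2 := Submodule.orthogonalProjectionOnto_norm_le Kc
        calc ‖P z‖ ≤ ‖Kc.orthogonalProjectionOnto‖ * ‖z‖ := h1
        _ ≤ 1 * ‖z‖ := mul_le_mul_of_nonneg_right h2 (norm_nonneg _)
        _ = ‖z‖ := one_mul _
  have hUv : U v = w := by
    have h1 : L 1 = v := by rw [hLa, map_one, ContinuousLinearMap.one_apply]
    have h2 : L' 1 = w := by rw [hL'a, map_one, ContinuousLinearMap.one_apply]
    rw [← h1, hUK 1, h2]
  -- invariance of Kc under the representation
  have hKcInv : ∀ (c : A), ∀ k ∈ Kc, π.hom c k ∈ Kc := by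
    intro c
    have hclosed : IsClosed {k : π.carrier | π.hom c k ∈ Kc} :=
      IsClosed.preimage (π.hom c).continuous (Submodule.isClosed_topologicalClosure K)
    have hsub : (K : Set π.carrier) ⊆ {k : π.carrier | π.hom c k ∈ Kc} := by
      rintro u ⟨a, rfl⟩
      have : π.hom c (L a) = L (c * a) := by
        rw [hLa, hLa, map_mul]; rfl
      rw [Set.mem_setOf_eq, this]
      exact K.le_topologicalClosure (LinearMap.mem_range_self L _)
    intro k hk
    have hk' : k ∈ closure (K : Set π.carrier) := by
      rw [← Submodule.topologicalClosure_coe]; exact hk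
    exact closure_minimal hsub hclosed hk'
  -- commutation
  have hcomm : ∀ b : A, π.hom b * U = U * π.hom b := by
    intro b
    ext z
    have hPz : (P z : π.carrier) ∈ Kc := (P z).2
    have hperp : z - (P z : π.carrier) ∈ Kcᗮ := Kc.sub_starProjection_mem_orthogonal z
    -- U intertwines on Kc
    have c1 : ∀ u ∈ Kc, U (π.hom b u) = π.hom b (U u) := by
      have hclosed : IsClosed {u : π.carrier | U (π.hom b u) = π.hom b (U u)} :=
        isClosed_eq (U.continuous.comp (π.hom b).continuous)
          ((π.hom b).continuous.comp U.continuous)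
      have hsub : (K : Set π.carrier) ⊆ {u : π.carrier | U (π.hom b u) = π.hom b (U u)} := by
        rintro u ⟨a, rfl⟩
        have h1 : π.hom b (L a) = L (b * a) := by rw [hLa, hLa, map_mul]; rfl
        have h2 : π.hom b (L' a) = L' (b * a) := by rw [hL'a, hL'a, map_mul]; rfl
        rw [Set.mem_setOf_eq, h1, hUK, hUK, h2]
      intro u hu
      have hu' : u ∈ closure (K : Set π.carrier) := by
        rw [← Submodule.topologicalClosure_coe]; exact hu
      exact closure_minimal hsub hclosed hu'
    -- the rep maps Kcᗮ into itself
    have c3 : ∀ u ∈ Kcᗮ, π.hom b u ∈ Kcᗮ := by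
      intro u hu
      rw [Submodule.mem_orthogonal]
      intro k hk
      have h1 : ⟪k, π.hom b u⟫_ℂ = ⟪π.hom (star b) k, u⟫_ℂ := by
        rw [rep_adjoint π (star b) k u, star_star]
      rw [h1]
      exact (Submodule.mem_orthogonal Kc u).mp hu _ (hKcInv (star b) k hk)
    have hzdec : z = (P z : π.carrier) + (z - (P z : π.carrier)) := by abel
    calc (π.hom b * U) z = π.hom b (U z) := rfl
    _ = π.hom b (U ((P z : π.carrier) + (z - (P z : π.carrier)))) := by rw [← hzdec]
    _ = π.hom b (U (P z : π.carrier) + U (z - (P z : π.carrier))) := by rw [map_add]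
    _ = π.hom b (U (P z : π.carrier)) := by rw [hUperp _ hperp, add_zero]
    _ = U (π.hom b (P z : π.carrier)) := (c1 _ hPz).symm
    _ = U (π.hom b (P z : π.carrier)) + U (π.hom b (z - (P z : π.carrier))) := by
        rw [hUperp _ (c3 _ hperp), add_zero]
    _ = U (π.hom b ((P z : π.carrier) + (z - (P z : π.carrier)))) := by
        rw [map_add (π.hom b), map_add U]
    _ = U (π.hom b z) := by rw [← hzdec]
    _ = (U * π.hom b) z := rfl
  exact ⟨U, hUnorm, hUv, hcomm⟩

end Intertwiner

/-- If `x ∈ S(π, ψ)` and `Z` is a positive operator in `π(A)''` with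
`φ(·) = ⟨Z x, π(·) Z x⟩`, then `F_π(ψ, φ) = ⟨x, Z x⟩`. -/
theorem stmt11 {A : Type*} [NormedRing A] [StarRing A] [CStarRing A] [NormedAlgebra ℂ A]
    [StarModule ℂ A] [CompleteSpace A]
    (ψ φ : A →L[ℂ] ℂ) (hψ : IsState ψ) (hφ : IsState φ)
    (π : CStarRep A) (x : π.carrier) (hx : x ∈ π.vecs ψ)
    (Z : π.carrier →L[ℂ] π.carrier)
    (hZmem : Z ∈ Set.centralizer (Set.centralizer (Set.range fun b : A => π.hom b)))
    (hZpos : Z.IsPositive)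
    (hZ : ∀ b : A, φ b = ⟪Z x, π.hom b (Z x)⟫_ℂ) :
    ⟪x, Z x⟫_ℂ = (π.fidelityIn ψ φ : ℂ) := by
  set c : ℝ := RCLike.re ⟪x, Z x⟫_ℂ with hc
  have hsa : ⟪Z x, x⟫_ℂ = ⟪x, Z x⟫_ℂ := by
    conv_lhs => rw [← hZpos.isSelfAdjoint.adjoint_eq]
    exact ContinuousLinearMap.adjoint_inner_left Z x x
  have hconj : (starRingEnd ℂ) ⟪x, Z x⟫_ℂ = ⟪x, Z x⟫_ℂ := by
    rw [inner_conj_symm]; exact hsa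
  have hreal : ⟪x, Z x⟫_ℂ = (c : ℂ) := (RCLike.conj_eq_iff_re.mp hconj).symm
  have hc0 : 0 ≤ c := by
    simpa [hc, ContinuousLinearMap.reApplyInnerSelf, inner_re_symm] using hZpos.2 x
  set Sset : Set ℝ :=
    {r : ℝ | ∃ x' ∈ π.vecs ψ, ∃ y' ∈ π.vecs φ, r = ‖⟪x', y'⟫_ℂ‖} with hSset
  have hZx_vec : Z x ∈ π.vecs φ := hZ
  have hmem : c ∈ Sset := by
    refine ⟨x, hx, Z x, hZx_vec, ?_⟩
    rw [hreal, Complex.norm_of_nonneg hc0]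
  have hub : ∀ r ∈ Sset, r ≤ c := by
    rintro r ⟨x', hx', y', hy', rfl⟩
    obtain ⟨U, hUn, hUx, hUc⟩ := exists_intertwiner π x x' (fun a => by rw [← hx a, ← hx' a])
    obtain ⟨V, hVn, hVx, hVc⟩ :=
      exists_intertwiner π (Z x) y' (fun a => by rw [← hZ a, ← hy' a])
    set cen : Set (π.carrier →L[ℂ] π.carrier) :=
      Set.centralizer (Set.range fun b : A => π.hom b) with hcen
    have hstar_mem : ∀ T, T ∈ cen → star T ∈ cen := by
      intro T hT
      rw [hcen, Set.mem_centralizer_iff]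
      rintro m ⟨b, rfl⟩
      have h1 : (π.hom (star b)) * T = T * π.hom (star b) :=
        hT (π.hom (star b)) ⟨star b, rfl⟩
      have h2 := congrArg star h1
      rw [star_mul, star_mul] at h2
      have h3 : star (π.hom (star b)) = π.hom b := by
        rw [map_star, star_star]
      rw [h3] at h2
      exact h2.symm
    have hUcen : U ∈ cen := by
      rw [hcen, Set.mem_centralizer_iff]
      rintro m ⟨b, rfl⟩
      exact hUc b
    have hVcen : V ∈ cen := by
      rw [hcen, Set.mem_centralizer_iff]
      rintro m ⟨b, rfl⟩
      exact hVc b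
    set Wop : π.carrier →L[ℂ] π.carrier := star U * V with hWop
    have hWcen : Wop ∈ cen := Set.mul_mem_centralizer (hstar_mem U hUcen) hVcen
    have hWscen : star Wop ∈ cen := hstar_mem Wop hWcen
    have hZW : Z * Wop = Wop * Z := (hZmem Wop hWcen).symm
    have hZWs : Z * star Wop = star Wop * Z := (hZmem (star Wop) hWscen).symm
    -- norm bounds
    have hUop : ‖U‖ ≤ 1 :=
      ContinuousLinearMap.opNorm_le_bound U zero_le_one (fun z => by rw [one_mul]; exact hUn z)
    have hVop : ‖V‖ ≤ 1 :=
      ContinuousLinearMap.opNorm_le_bound V zero_le_one (fun z => by rw [one_mul]; exact hVn z)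
    have hWopn : ‖Wop‖ ≤ 1 := by
      calc ‖Wop‖ ≤ ‖star U‖ * ‖V‖ := norm_mul_le _ _
      _ ≤ 1 * 1 := by
          apply mul_le_mul _ hVop (norm_nonneg _) zero_le_one
          rw [norm_star]; exact hUop
      _ = 1 := one_mul 1
    have hWn : ∀ y : π.carrier, ‖Wop y‖ ≤ ‖y‖ := fun y => by
      calc ‖Wop y‖ ≤ ‖Wop‖ * ‖y‖ := Wop.le_opNorm y
      _ ≤ 1 * ‖y‖ := mul_le_mul_of_nonneg_right hWopn (norm_nonneg _)
      _ = ‖y‖ := one_mul _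
    have hWsn : ∀ y : π.carrier, ‖(star Wop) y‖ ≤ ‖y‖ := fun y => by
      calc ‖(star Wop) y‖ ≤ ‖star Wop‖ * ‖y‖ := (star Wop).le_opNorm y
      _ ≤ 1 * ‖y‖ := by
          apply mul_le_mul_of_nonneg_right _ (norm_nonneg _)
          rw [norm_star]; exact hWopn
      _ = ‖y‖ := one_mul _
    have hinner : ⟪x', y'⟫_ℂ = ⟪x, Wop (Z x)⟫_ℂ := by
      rw [← hUx, ← hVx]
      have h1 : Wop (Z x) = (star U) (V (Z x)) := rfl
      rw [h1, ContinuousLinearMap.star_eq_adjoint, ContinuousLinearMap.adjoint_inner_right]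
    calc ‖⟪x', y'⟫_ℂ‖ = ‖⟪x, Wop (Z x)⟫_ℂ‖ := by
          rw [hinner]
    _ ≤ c := key_bound Z Wop hZpos hWn hWsn hZW hZWs x
  have hSup : π.fidelityIn ψ φ = c := by
    apply le_antisymm
    · exact csSup_le ⟨c, hmem⟩ hub
    · exact le_csSup ⟨c, hub⟩ hmem
  rw [hSup]
  exact hreal

end
end

section
/- The Bures distance D(ψ,φ) := inf over representations π of inf{‖x-y‖ : x ∈ S(π,ψ), y ∈ S(π,φ)} satisfies D(ψ,φ)² = 2 - 2F(ψ,φ), where F is the Bures fidelity. -/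
open scoped InnerProductSpace ComplexOrder

noncomputable section

section Auxiliary

variable {A : Type*} [NormedRing A] [StarRing A] [NormedAlgebra ℂ A]

/-- The trivial representation on the zero Hilbert space. -/
def trivRep (A : Type*) [NormedRing A] [StarRing A] [NormedAlgebra ℂ A] : CStarRep A where
  carrier := EuclideanSpace ℂ (Fin 0)
  hom :=
    { toFun := fun _ => 1
      map_one' := rfl
      map_mul' := fun _ _ => Subsingleton.elim _ _
      map_zero' := Subsingleton.elim _ _
      map_add' := fun _ _ => Subsingleton.elim _ _
      commutes' := fun _ => Subsingleton.elim _ _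
      map_star' := fun _ => Subsingleton.elim _ _ }

lemma norm_one_of_mem_vecs {π : CStarRep A} {ψ : A →L[ℂ] ℂ} (hψ : ψ 1 = 1)
    {x : π.carrier} (hx : x ∈ π.vecs ψ) : ‖x‖ = 1 := by
  have h := hx 1
  rw [hψ, map_one] at h
  simp only [ContinuousLinearMap.one_apply] at h
  have h2 : ‖x‖ ^ 2 = 1 := by
    have h3 : RCLike.re (1 : ℂ) = RCLike.re ⟪x, x⟫_ℂ := congrArg _ h
    rw [inner_self_eq_norm_sq (𝕜 := ℂ), RCLike.one_re] at h3
    exact h3.symm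
  nlinarith [norm_nonneg x]

lemma smul_mem_vecs {π : CStarRep A} {ψ : A →L[ℂ] ℂ} {x : π.carrier} (hx : x ∈ π.vecs ψ)
    {c : ℂ} (hc : ‖c‖ = 1) : c • x ∈ π.vecs ψ := by
  intro a
  have hcc : (starRingEnd ℂ) c * c = 1 := by
    rw [RCLike.conj_mul, hc]; norm_num
  rw [hx a, map_smul, inner_smul_left, inner_smul_right, ← mul_assoc, hcc, one_mul]

lemma abs_inner_le_one {π : CStarRep A} {ψ φ : A →L[ℂ] ℂ} (hψ : ψ 1 = 1) (hφ : φ 1 = 1)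
    {x y : π.carrier} (hx : x ∈ π.vecs ψ) (hy : y ∈ π.vecs φ) :
    ‖⟪x, y⟫_ℂ‖ ≤ 1 := by
  have := norm_inner_le_norm (𝕜 := ℂ) x y
  rw [norm_one_of_mem_vecs hψ hx, norm_one_of_mem_vecs hφ hy, one_mul] at this
  exact this

lemma fidelityIn_le_one {π : CStarRep A} {ψ φ : A →L[ℂ] ℂ} (hψ : ψ 1 = 1) (hφ : φ 1 = 1) :
    π.fidelityIn ψ φ ≤ 1 := by
  apply Real.sSup_le _ zero_le_one
  rintro r ⟨x, hx, y, hy, rfl⟩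
  exact abs_inner_le_one hψ hφ hx hy

lemma fidelityIn_nonneg (π : CStarRep A) (ψ φ : A →L[ℂ] ℂ) : 0 ≤ π.fidelityIn ψ φ := by
  apply Real.sSup_nonneg
  rintro r ⟨x, hx, y, hy, rfl⟩
  exact norm_nonneg _

lemma distIn_nonneg (π : CStarRep A) (ψ φ : A →L[ℂ] ℂ) : 0 ≤ π.distIn ψ φ := by
  classical
  unfold CStarRep.distIn
  split
  · apply Real.sInf_nonneg
    rintro r ⟨x, hx, y, hy, rfl⟩
    exact norm_nonneg _
  · exact Real.sqrt_nonneg 2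

lemma distIn_sq (π : CStarRep A) {ψ φ : A →L[ℂ] ℂ} (hψ : ψ 1 = 1) (hφ : φ 1 = 1) :
    π.distIn ψ φ ^ 2 = 2 - 2 * π.fidelityIn ψ φ := by
  classical
  by_cases h : (π.vecs ψ).Nonempty ∧ (π.vecs φ).Nonempty
  · obtain ⟨⟨x0, hx0⟩, ⟨y0, hy0⟩⟩ := h
    have hd : π.distIn ψ φ =
        sInf {r : ℝ | ∃ x ∈ π.vecs ψ, ∃ y ∈ π.vecs φ, r = ‖x - y‖} := by
      unfold CStarRep.distIn
      rw [if_pos ⟨⟨x0, hx0⟩, ⟨y0, hy0⟩⟩]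
    set S := {r : ℝ | ∃ x ∈ π.vecs ψ, ∃ y ∈ π.vecs φ, r = ‖x - y‖} with hS
    set F := π.fidelityIn ψ φ with hF
    have hSne : S.Nonempty := ⟨‖x0 - y0‖, x0, hx0, y0, hy0, rfl⟩
    have hSbd : BddBelow S := ⟨0, by rintro r ⟨x, hx, y, hy, rfl⟩; exact norm_nonneg _⟩
    have hInf0 : 0 ≤ sInf S := le_csInf hSne (by rintro r ⟨x, hx, y, hy, rfl⟩; exact norm_nonneg _)
    have hFbd : BddAbove {r : ℝ | ∃ x ∈ π.vecs ψ, ∃ y ∈ π.vecs φ, r = ‖⟪x, y⟫_ℂ‖} :=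
      ⟨1, by rintro r ⟨x, hx, y, hy, rfl⟩; exact abs_inner_le_one hψ hφ hx hy⟩
    -- the square-norm formula
    have hsq : ∀ x ∈ π.vecs ψ, ∀ y ∈ π.vecs φ,
        ‖x - y‖ ^ 2 = 2 - 2 * Complex.re ⟪x, y⟫_ℂ := by
      intro x hx y hy
      rw [norm_sub_sq (𝕜 := ℂ) x y, norm_one_of_mem_vecs hψ hx, norm_one_of_mem_vecs hφ hy,
        RCLike.re_to_complex]
      ring
    -- key upper bound: for all implementing x, y we have (sInf S)^2 ≤ 2 - 2|⟪x,y⟫|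
    have key : ∀ x ∈ π.vecs ψ, ∀ y ∈ π.vecs φ,
        (sInf S) ^ 2 ≤ 2 - 2 * ‖⟪x, y⟫_ℂ‖ := by
      intro x hx y hy
      set c : ℂ := if ⟪x, y⟫_ℂ = 0 then 1 else ⟪x, y⟫_ℂ / (‖⟪x, y⟫_ℂ‖ : ℂ) with hc
      have hcabs : ‖c‖ = 1 := by
        rw [hc]
        split
        · simp
        · rename_i h0
          rw [norm_div, Complex.norm_real, norm_norm,
            div_self (by simpa using h0)]
      have hcx : c • x ∈ π.vecs ψ := smul_mem_vecs hx hcabs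
      have hinner : ⟪c • x, y⟫_ℂ = (‖⟪x, y⟫_ℂ‖ : ℂ) := by
        rw [inner_smul_left, hc]
        split
        · rename_i h0; rw [h0]; simp [h0]
        · rename_i h0
          rw [map_div₀]
          have : (starRingEnd ℂ) ((‖⟪x, y⟫_ℂ‖ : ℂ)) = (‖⟪x, y⟫_ℂ‖ : ℂ) :=
            Complex.conj_ofReal _
          rw [this, div_mul_eq_mul_div, RCLike.conj_mul]
          have hne : (‖⟪x, y⟫_ℂ‖ : ℂ) ≠ 0 := by
            simpa using h0
          field_simp
          rfl
      have hmem : ‖c • x - y‖ ∈ S := ⟨c • x, hcx, y, hy, rfl⟩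
      have hle : sInf S ≤ ‖c • x - y‖ := csInf_le hSbd hmem
      have heq : ‖c • x - y‖ ^ 2 = 2 - 2 * ‖⟪x, y⟫_ℂ‖ := by
        rw [hsq _ hcx _ hy, hinner]
        norm_num
      calc (sInf S) ^ 2 ≤ ‖c • x - y‖ ^ 2 := by
            apply pow_le_pow_left₀ hInf0 hle
        _ = 2 - 2 * ‖⟪x, y⟫_ℂ‖ := heq
    -- first inequality: (sInf S)^2 ≤ 2 - 2F
    have h1 : F ≤ 1 - (sInf S) ^ 2 / 2 := by
      rw [hF]
      apply Real.sSup_le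
      · rintro r ⟨x, hx, y, hy, rfl⟩
        have := key x hx y hy
        linarith
      · have := key x0 hx0 y0 hy0
        have h0 := norm_nonneg ⟪x0, y0⟫_ℂ
        nlinarith
    -- second inequality: 2 - 2F ≤ (sInf S)^2
    have hF1 : F ≤ 1 := fidelityIn_le_one hψ hφ
    have h2 : Real.sqrt (2 - 2 * F) ≤ sInf S := by
      apply le_csInf hSne
      rintro r ⟨x, hx, y, hy, rfl⟩
      have hab : ‖⟪x, y⟫_ℂ‖ ≤ F :=
        le_csSup hFbd ⟨x, hx, y, hy, rfl⟩
      have hre : Complex.re ⟪x, y⟫_ℂ ≤ ‖⟪x, y⟫_ℂ‖ := Complex.re_le_norm _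
      have hxy2 : 2 - 2 * F ≤ ‖x - y‖ ^ 2 := by
        rw [hsq x hx y hy]; linarith
      calc Real.sqrt (2 - 2 * F) ≤ Real.sqrt (‖x - y‖ ^ 2) := Real.sqrt_le_sqrt hxy2
        _ = ‖x - y‖ := Real.sqrt_sq (norm_nonneg _)
    have h2' : 2 - 2 * F ≤ (sInf S) ^ 2 := by
      have := pow_le_pow_left₀ (Real.sqrt_nonneg _) h2 2
      rwa [Real.sq_sqrt (by linarith : (0:ℝ) ≤ 2 - 2 * F)] at this
    rw [hd]
    linarith
  · unfold CStarRep.distIn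
    rw [if_neg h]
    have hempty : {r : ℝ | ∃ x ∈ π.vecs ψ, ∃ y ∈ π.vecs φ, r = ‖⟪x, y⟫_ℂ‖} = ∅ := by
      ext r
      simp only [Set.mem_setOf_eq, Set.mem_empty_iff_false, iff_false]
      rintro ⟨x, hx, y, hy, rfl⟩
      exact h ⟨⟨x, hx⟩, ⟨y, hy⟩⟩
    have : π.fidelityIn ψ φ = 0 := by
      unfold CStarRep.fidelityIn
      rw [hempty, Real.sSup_empty]
    rw [this, Real.sq_sqrt (by norm_num : (0:ℝ) ≤ 2)]
    ring

end Auxiliary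

/-- The Bures distance and fidelity satisfy `D(ψ, φ)² = 2 - 2 F(ψ, φ)`. -/
theorem stmt15 {A : Type*} [NormedRing A] [StarRing A] [CStarRing A] [NormedAlgebra ℂ A]
    [StarModule ℂ A] [CompleteSpace A]
    (ψ φ : A →L[ℂ] ℂ) (hψ : IsState ψ) (hφ : IsState φ) :
    buresDist ψ φ ^ 2 = 2 - 2 * fidelity ψ φ := by
  have hψ1 : ψ 1 = 1 := hψ.1
  have hφ1 : φ 1 = 1 := hφ.1
  set G := {r : ℝ | ∃ π : CStarRep A, r = π.fidelityIn ψ φ} with hG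
  set Ds := {r : ℝ | ∃ π : CStarRep A, r = π.distIn ψ φ} with hDs
  have hGne : G.Nonempty := ⟨_, trivRep A, rfl⟩
  have hDne : Ds.Nonempty := ⟨_, trivRep A, rfl⟩
  have hGbd : BddAbove G := ⟨1, by rintro r ⟨π, rfl⟩; exact fidelityIn_le_one hψ1 hφ1⟩
  have hDbd : BddBelow Ds := ⟨0, by rintro r ⟨π, rfl⟩; exact distIn_nonneg π ψ φ⟩
  have hF : fidelity ψ φ = sSup G := rfl
  have hD : buresDist ψ φ = sInf Ds := rfl
  set F := sSup G with hFdef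
  set D := sInf Ds with hDdef
  have hF1 : F ≤ 1 := by
    apply Real.sSup_le _ zero_le_one
    rintro r ⟨π, rfl⟩; exact fidelityIn_le_one hψ1 hφ1
  have hD0 : 0 ≤ D := le_csInf hDne (by rintro r ⟨π, rfl⟩; exact distIn_nonneg π ψ φ)
  -- each distIn π = sqrt (2 - 2 * fidelityIn π)
  have hdist : ∀ π : CStarRep A, π.distIn ψ φ = Real.sqrt (2 - 2 * π.fidelityIn ψ φ) := by
    intro π
    have := distIn_sq π hψ1 hφ1
    rw [← this, Real.sqrt_sq (distIn_nonneg π ψ φ)]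
  -- D² ≥ 2 - 2F
  have h1 : Real.sqrt (2 - 2 * F) ≤ D := by
    apply le_csInf hDne
    rintro r ⟨π, rfl⟩
    rw [hdist π]
    apply Real.sqrt_le_sqrt
    have : π.fidelityIn ψ φ ≤ F := le_csSup hGbd ⟨π, rfl⟩
    linarith
  have h1' : 2 - 2 * F ≤ D ^ 2 := by
    have := pow_le_pow_left₀ (Real.sqrt_nonneg _) h1 2
    rwa [Real.sq_sqrt (by linarith : (0:ℝ) ≤ 2 - 2 * F)] at this
  -- D² ≤ 2 - 2F
  have hDsq : ∀ π : CStarRep A, D ^ 2 ≤ 2 - 2 * π.fidelityIn ψ φ := by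
    intro π
    have hle : D ≤ π.distIn ψ φ := csInf_le hDbd ⟨π, rfl⟩
    calc D ^ 2 ≤ π.distIn ψ φ ^ 2 := pow_le_pow_left₀ hD0 hle 2
      _ = 2 - 2 * π.fidelityIn ψ φ := distIn_sq π hψ1 hφ1
  have hD2 : D ^ 2 ≤ 2 := by
    have := hDsq (trivRep A)
    have := fidelityIn_nonneg (trivRep A) ψ φ
    linarith
  have h2 : F ≤ 1 - D ^ 2 / 2 := by
    apply Real.sSup_le
    · rintro r ⟨π, rfl⟩
      have := hDsq π
      linarith
    · linarith
  rw [hD, hF]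
  linarith

end
end
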